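/- arXiv:1711.07420 — 4 statements merged into one kernel-verified Lean document; each statement's English description precedes it below -/
import Mathlib

section
/- Let $M_1, \ldots, M_m$ be $n \times n$ complex matrices, let $P = M_1 \cdots M_m$, and let $\mathcal{M}$ be the $mn \times mn$ block cyclic matrix whose $(k, k+1)$ block is $M_k$ for $1 \le k \le m-1$, whose $(m,1)$ block is $M_m$, and all other blocks zero. Then for every $z \in \mathbb{C}$, $\det(\mathcal{M}^m - zI_{mn}) = [\det(P - zI_n)]^m$. -/
open Matrix

/-!
Up to reordering the indices, `𝓜 ^ m` is block diagonal, its `a`-th diagonal block being the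
cyclic product `M_a M_{a+1} ⋯ M_{a-1}`. Each such block is a rotation `B * A` of `P = A * B`,
and `A * B` and `B * A` have the same characteristic polynomial.
-/

/-- The `mn × mn` block cyclic linearization: block `(a, a+1)` (cyclically) is `Ms a`,
all other blocks vanish. -/
def blockCyclic {m n : ℕ} [NeZero m] (Ms : Fin m → Matrix (Fin n) (Fin n) ℂ) :
    Matrix (Fin m × Fin n) (Fin m × Fin n) ℂ :=
  fun p q => if q.1 = p.1 + 1 then Ms p.1 p.2 q.2 else 0

theorem Matrix.det_sub_smul_one_eq_eval_charpoly {ι R : Type*} [Fintype ι] [DecidableEq ι]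
    [CommRing R] (A : Matrix ι ι R) (z : R) :
    (A - z • 1).det = (-1) ^ Fintype.card ι * A.charpoly.eval z := by
  rw [eval_charpoly, ← det_neg, neg_sub, scalar_apply, smul_one_eq_diagonal]

theorem Matrix.det_mul_sub_smul_one_comm {ι R : Type*} [Fintype ι] [DecidableEq ι]
    [CommRing R] (A B : Matrix ι ι R) (z : R) :
    (A * B - z • 1).det = (B * A - z • 1).det := by
  rw [det_sub_smul_one_eq_eval_charpoly, det_sub_smul_one_eq_eval_charpoly, charpoly_mul_comm]

section cycProd
open Fin.NatCast
variable {M : Type*} [Monoid M] {m : ℕ} [NeZero m] (f : Fin m → M)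

def cycProd (s k : ℕ) : M :=
  ((List.range k).map fun i => f ((s + i : ℕ) : Fin m)).prod

@[simp] theorem cycProd_zero (s : ℕ) : cycProd f s 0 = 1 := rfl

theorem cycProd_succ (s k : ℕ) :
    cycProd f s (k + 1) = cycProd f s k * f ((s + k : ℕ) : Fin m) := by
  simp [cycProd, List.range_succ]

theorem cycProd_add (s k l : ℕ) : cycProd f s (k + l) = cycProd f s k * cycProd f (s + k) l := by
  simp [cycProd, List.range_add, Function.comp_def, add_assoc]

theorem cycProd_add_period (s k : ℕ) : cycProd f (s + m) k = cycProd f s k := by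
  simp [cycProd, add_right_comm s m]

theorem cycProd_zero_self : cycProd f 0 m = (List.ofFn f).prod := by
  simp [cycProd, ← List.map_coe_finRange_eq_range, List.ofFn_eq_map, Function.comp_def]

theorem exists_cycProd_eq_mul_swap {s k : ℕ} (hk : k ≤ m) :
    ∃ A B, cycProd f s m = A * B ∧ cycProd f (s + k) m = B * A :=
  ⟨cycProd f s k, cycProd f (s + k) (m - k), by rw [← cycProd_add, Nat.add_sub_cancel' hk],
    by rw [← cycProd_add_period f s k, show s + m = s + k + (m - k) by omega, ← cycProd_add,
      Nat.sub_add_cancel hk]⟩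

end cycProd

theorem det_cycProd_sub_smul_one {ι R : Type*} [Fintype ι] [DecidableEq ι] [CommRing R]
    {m : ℕ} [NeZero m] (f : Fin m → Matrix ι ι R) (a : Fin m) (z : R) :
    (cycProd f a m - z • 1).det = ((List.ofFn f).prod - z • 1).det := by
  obtain ⟨A, B, hAB, hBA⟩ := exists_cycProd_eq_mul_swap f (s := 0) a.is_lt.le
  rw [zero_add] at hBA
  rw [← cycProd_zero_self, hAB, hBA, det_mul_sub_smul_one_comm]

section blockCyclic
open Fin.NatCast
variable {m n : ℕ} [NeZero m] (Ms : Fin m → Matrix (Fin n) (Fin n) ℂ)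

theorem blockCyclic_pow_apply (k : ℕ) (a b : Fin m) (i j : Fin n) :
    (blockCyclic Ms ^ k) (a, i) (b, j) = if b = a + k then cycProd Ms a k i j else 0 := by
  induction k generalizing b j with
  | zero => simp [one_apply, eq_comm, ite_and]
  | succ k ih =>
    simp only [pow_succ, mul_apply, ih, blockCyclic, mul_ite, ite_mul, zero_mul, mul_zero,
      Fintype.sum_prod_type, Finset.sum_ite_irrel, Finset.sum_const_zero, Nat.cast_add, Nat.cast_one]
    rw [Finset.sum_eq_single (a + k) (fun c _ hc => by simp [hc]) (by simp)]
    simp [cycProd_succ, mul_apply, add_assoc]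

theorem blockCyclic_pow_self_sub_smul_one (z : ℂ) :
    blockCyclic Ms ^ m - z • 1 = (blockDiagonal fun a : Fin m => cycProd Ms a m - z • 1).submatrix
      (Equiv.prodComm _ _) (Equiv.prodComm _ _) := by
  ext ⟨a, i⟩ ⟨b, j⟩
  simp [blockCyclic_pow_apply, blockDiagonal_apply, one_apply, eq_comm, ite_and, ite_sub_ite]

end blockCyclic

theorem det_pow_blockCyclic {m n : ℕ} [NeZero m]
    (Ms : Fin m → Matrix (Fin n) (Fin n) ℂ)
    (P : Matrix (Fin n) (Fin n) ℂ)
    (hP : P = (List.ofFn Ms).prod) :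
    ∀ z : ℂ,
      ((blockCyclic Ms) ^ m - z • (1 : Matrix (Fin m × Fin n) (Fin m × Fin n) ℂ)).det
        = ((P - z • (1 : Matrix (Fin n) (Fin n) ℂ)).det) ^ m := by
  intro z
  rw [blockCyclic_pow_self_sub_smul_one, det_submatrix_equiv_self, det_blockDiagonal]
  simp [det_cycProd_sub_smul_one, hP]
end

section
/- Let $\xi$ be a complex-valued random variable with mean zero, unit variance, independent real and imaginary parts, and finite fourth moment. With $\tilde{\xi}$ defined by truncating the real and imaginary parts of $\xi$ at level $L/\sqrt{2}$ and recentering, if $L \ge \sqrt{8\,\mathbb{E}|\xi|^4}$, then $\mathrm{Var}(\tilde{\xi}) \ge 1/2$. -/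
/-!
Split each coordinate `W` of `ξ` as `T + U` with `T` its truncation and `U = W - T` the tail.
Since `T U = 0` and `𝔼 W = 0`, `Var T = 𝔼 T² - (𝔼 U)² ≥ 𝔼 W² - 2 𝔼 U²`, and on the tail
`W² > L² / 2`, so `𝔼 U² ≤ 2 𝔼 W⁴ / L²`. Summing over both coordinates,
`Var ξ̃ ≥ 1 - 4 𝔼|ξ|⁴ / L² ≥ 1/2`. Positivity of `L` comes from `𝔼|ξ|⁴ ≥ (𝔼|ξ|²)² = 1`.
-/

open MeasureTheory ProbabilityTheory

/-- Truncation of a real number at level `L / √2`. -/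
noncomputable def truncAt (L : ℝ) (x : ℝ) : ℝ := if |x| ≤ L / Real.sqrt 2 then x else 0

/-- The truncated and recentered random variable `ξ̃` obtained from a complex random variable
`ξ` by truncating its real and imaginary parts at level `L / √2` and recentering. -/
noncomputable def truncXi {Ω : Type*} [MeasurableSpace Ω] (P : MeasureTheory.Measure Ω)
    (L : ℝ) (ξ : Ω → ℂ) (ω : Ω) : ℂ :=
  ((truncAt L (ξ ω).re - ∫ ω', truncAt L (ξ ω').re ∂P : ℝ) : ℂ) +
    Complex.I * ((truncAt L (ξ ω).im - ∫ ω', truncAt L (ξ ω').im ∂P : ℝ) : ℂ)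

lemma measurable_truncAt (L : ℝ) : Measurable (truncAt L) :=
  Measurable.ite (measurableSet_le continuous_abs.measurable measurable_const)
    measurable_id measurable_const

lemma abs_truncAt_le (L x : ℝ) : |truncAt L x| ≤ |x| := by
  unfold truncAt; split_ifs <;> simp

lemma truncAt_sq_add_sq_sub_truncAt (L x : ℝ) :
    truncAt L x ^ 2 + (x - truncAt L x) ^ 2 = x ^ 2 := by
  unfold truncAt; split_ifs <;> ring

lemma sq_sub_truncAt_le {L : ℝ} (hL : 0 < L) (x : ℝ) :
    (x - truncAt L x) ^ 2 ≤ 2 * x ^ 4 / L ^ 2 := by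
  unfold truncAt
  split_ifs with hx
  · rw [sub_self, zero_pow two_ne_zero]; positivity
  · have hlevel : L ^ 2 / 2 < x ^ 2 := by
      have h := (div_lt_iff₀ (by positivity)).1 (not_le.1 hx)
      nlinarith [sq_abs x, abs_nonneg x, Real.sq_sqrt (zero_le_two : (0:ℝ) ≤ 2),
        Real.sqrt_nonneg 2]
    rw [le_div_iff₀ (by positivity)]
    nlinarith [sq_nonneg x]

section Moments

variable {Ω : Type*} [MeasurableSpace Ω] {P : Measure Ω}

lemma MeasureTheory.MemLp.truncAt {p : ENNReal} {W : Ω → ℝ} (hW : MemLp W p P) (L : ℝ) :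
    MemLp (fun ω => truncAt L (W ω)) p P :=
  hW.mono ((measurable_truncAt L).comp_aemeasurable hW.aemeasurable).aestronglyMeasurable
    (.of_forall fun ω => by simpa only [Real.norm_eq_abs] using abs_truncAt_le L (W ω))

lemma MeasureTheory.MemLp.integrable_pow {W : Ω → ℝ} {n : ℕ} (hW : MemLp W n P) (hn : n ≠ 0) :
    Integrable (fun ω => W ω ^ n) P :=
  (hW.integrable_norm_pow hn).mono' (hW.aestronglyMeasurable.pow n)
    (.of_forall fun ω => (norm_pow (W ω) n).le)

lemma integral_re_sq_add_integral_im_sq {ξ : Ω → ℂ} (hξ : MemLp ξ 2 P) :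
    ∫ ω, (ξ ω).re ^ 2 ∂P + ∫ ω, (ξ ω).im ^ 2 ∂P = ∫ ω, ‖ξ ω‖ ^ 2 ∂P := by
  have hre : Integrable (fun ω => (ξ ω).re ^ 2) P := hξ.re.integrable_pow two_ne_zero
  have him : Integrable (fun ω => (ξ ω).im ^ 2) P := hξ.im.integrable_pow two_ne_zero
  rw [← integral_add hre him]
  exact integral_congr_ae (.of_forall fun ω => by linarith [Complex.sq_norm_sub_sq_re (ξ ω)])

lemma integral_re_pow_four_add_integral_im_pow_four_le {ξ : Ω → ℂ} (hξ : MemLp ξ 4 P) :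
    ∫ ω, (ξ ω).re ^ 4 ∂P + ∫ ω, (ξ ω).im ^ 4 ∂P ≤ ∫ ω, ‖ξ ω‖ ^ 4 ∂P := by
  have hre : Integrable (fun ω => (ξ ω).re ^ 4) P := hξ.re.integrable_pow four_ne_zero
  have him : Integrable (fun ω => (ξ ω).im ^ 4) P := hξ.im.integrable_pow four_ne_zero
  rw [← integral_add hre him]
  refine integral_mono (hre.add him) (hξ.integrable_norm_pow four_ne_zero) fun ω => ?_
  have h : ‖ξ ω‖ ^ 4 = ((ξ ω).re ^ 2 + (ξ ω).im ^ 2) ^ 2 := by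
    rw [← Complex.sq_norm_sub_sq_re (ξ ω)]; ring
  nlinarith [sq_nonneg ((ξ ω).re * (ξ ω).im)]

lemma norm_truncXi_sq (L : ℝ) (ξ : Ω → ℂ) (ω : Ω) :
    ‖truncXi P L ξ ω‖ ^ 2 = (truncAt L (ξ ω).re - ∫ ω', truncAt L (ξ ω').re ∂P) ^ 2 +
      (truncAt L (ξ ω).im - ∫ ω', truncAt L (ξ ω').im ∂P) ^ 2 := by
  rw [truncXi, mul_comm, Complex.sq_norm, Complex.normSq_add_mul_I]

variable [IsProbabilityMeasure P]

lemma sq_integral_le_integral_sq {Y : Ω → ℝ} (hY : MemLp Y 2 P) :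
    (∫ ω, Y ω ∂P) ^ 2 ≤ ∫ ω, Y ω ^ 2 ∂P := by
  have h := variance_nonneg Y P
  rw [variance_eq_sub hY] at h
  simpa using h

lemma sq_integral_norm_sq_le_integral_norm_pow_four {E : Type*} [NormedAddCommGroup E]
    {X : Ω → E} (hX : AEStronglyMeasurable X P) (h4 : Integrable (fun ω => ‖X ω‖ ^ 4) P) :
    (∫ ω, ‖X ω‖ ^ 2 ∂P) ^ 2 ≤ ∫ ω, ‖X ω‖ ^ 4 ∂P := by
  have hnorm_sq : MemLp (fun ω => ‖X ω‖ ^ 2) 2 P :=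
    (memLp_two_iff_integrable_sq (hX.norm.pow 2)).2
      (by simpa only [Pi.pow_apply, ← pow_mul] using h4)
  simpa only [← pow_mul] using sq_integral_le_integral_sq hnorm_sq

lemma integral_sq_sub_integral_sq_le_variance {X Y : Ω → ℝ} (hX : MemLp X 2 P)
    (hY : MemLp Y 2 P) (hXY : ∫ ω, X ω ∂P + ∫ ω, Y ω ∂P = 0) :
    ∫ ω, X ω ^ 2 ∂P - ∫ ω, Y ω ^ 2 ∂P ≤ Var[X; P] := by
  have hXY' : (∫ ω, X ω ∂P) ^ 2 = (∫ ω, Y ω ∂P) ^ 2 := by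
    rw [eq_neg_of_add_eq_zero_left hXY, neg_sq]
  rw [variance_eq_sub hX]
  simp only [Pi.pow_apply]
  linarith [sq_integral_le_integral_sq hY]

lemma le_variance_truncAt {W : Ω → ℝ} (hW : MemLp W 4 P) (hmean : ∫ ω, W ω ∂P = 0)
    {L : ℝ} (hL : 0 < L) :
    ∫ ω, W ω ^ 2 ∂P - 4 * (∫ ω, W ω ^ 4 ∂P) / L ^ 2 ≤ Var[fun ω => truncAt L (W ω); P] := by
  have hW2 : MemLp W 2 P := hW.mono_exponent (by norm_num)
  set T := fun ω => truncAt L (W ω)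
  have hT : MemLp T 2 P := hW2.truncAt L
  have hU : MemLp (fun ω => W ω - T ω) 2 P := hW2.sub hT
  have hmeans : ∫ ω, T ω ∂P + ∫ ω, W ω - T ω ∂P = 0 := by
    rw [← integral_add (hT.integrable one_le_two) (hU.integrable one_le_two)]
    simpa using hmean
  have hsplit : ∫ ω, T ω ^ 2 ∂P + ∫ ω, (W ω - T ω) ^ 2 ∂P = ∫ ω, W ω ^ 2 ∂P := by
    rw [← integral_add hT.integrable_sq hU.integrable_sq]
    simp only [T, truncAt_sq_add_sq_sub_truncAt]
  have htail : ∫ ω, (W ω - T ω) ^ 2 ∂P ≤ 2 * (∫ ω, W ω ^ 4 ∂P) / L ^ 2 := by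
    have h4 : Integrable (fun ω => W ω ^ 4) P := hW.integrable_pow (by norm_num)
    calc ∫ ω, (W ω - T ω) ^ 2 ∂P ≤ ∫ ω, 2 * W ω ^ 4 / L ^ 2 ∂P :=
          integral_mono hU.integrable_sq ((h4.const_mul 2).div_const _)
            fun ω => sq_sub_truncAt_le hL (W ω)
      _ = 2 * (∫ ω, W ω ^ 4 ∂P) / L ^ 2 := by rw [integral_div, integral_const_mul]
  have hvar := integral_sq_sub_integral_sq_le_variance hT hU hmeans
  rw [show 4 * (∫ ω, W ω ^ 4 ∂P) / L ^ 2 = 2 * (2 * (∫ ω, W ω ^ 4 ∂P) / L ^ 2) by ring]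
  linarith

lemma integral_norm_truncXi_sq {ξ : Ω → ℂ} (hξ : MemLp ξ 2 P) (L : ℝ) :
    ∫ ω, ‖truncXi P L ξ ω‖ ^ 2 ∂P =
      Var[fun ω => truncAt L (ξ ω).re; P] + Var[fun ω => truncAt L (ξ ω).im; P] := by
  have hre : MemLp (fun ω => truncAt L (ξ ω).re) 2 P := hξ.re.truncAt L
  have him : MemLp (fun ω => truncAt L (ξ ω).im) 2 P := hξ.im.truncAt L
  rw [variance_eq_integral hre.aemeasurable, variance_eq_integral him.aemeasurable]
  exact (integral_congr_ae (.of_forall fun ω => norm_truncXi_sq L ξ ω)).trans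
    (integral_add (hre.sub (memLp_const _)).integrable_sq (him.sub (memLp_const _)).integrable_sq)

end Moments

theorem truncation_variance_ge_half_general
    {Ω : Type*} [MeasurableSpace Ω] (P : Measure Ω) [IsProbabilityMeasure P]
    (ξ : Ω → ℂ) (hmeas : AEMeasurable ξ P)
    (hmean : ∫ ω, ξ ω ∂P = 0)
    (hvar : ∫ ω, ‖ξ ω‖ ^ 2 ∂P = 1)
    (h4 : Integrable (fun ω => ‖ξ ω‖ ^ 4) P)
    (L : ℝ) (hL : Real.sqrt (8 * ∫ ω, ‖ξ ω‖ ^ 4 ∂P) ≤ L) :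
    (1 : ℝ) / 2 ≤ ∫ ω, ‖truncXi P L ξ ω‖ ^ 2 ∂P := by
  have hξ4 : MemLp ξ 4 P := by
    rw [← integrable_norm_rpow_iff hmeas.aestronglyMeasurable (by norm_num) (by norm_num)]
    simpa using h4
  have hξ2 : MemLp ξ 2 P := hξ4.mono_exponent (by norm_num)
  have hM : 1 ≤ ∫ ω, ‖ξ ω‖ ^ 4 ∂P := by
    simpa [hvar] using sq_integral_norm_sq_le_integral_norm_pow_four hmeas.aestronglyMeasurable h4
  have hL2 : 8 * ∫ ω, ‖ξ ω‖ ^ 4 ∂P ≤ L ^ 2 := (Real.sqrt_le_iff.1 hL).2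
  have hL0 : 0 < L := (Real.sqrt_pos.2 (by linarith)).trans_le hL
  have hξint : Integrable ξ P := hξ4.integrable (by norm_num)
  have hre0 : ∫ ω, (ξ ω).re ∂P = 0 := (integral_re hξint).trans (by simp [hmean])
  have him0 : ∫ ω, (ξ ω).im ∂P = 0 := (integral_im hξint).trans (by simp [hmean])
  have hre4 : MemLp (fun ω => (ξ ω).re) 4 P := hξ4.re
  have him4 : MemLp (fun ω => (ξ ω).im) 4 P := hξ4.im
  have hre := le_variance_truncAt hre4 hre0 hL0
  have him := le_variance_truncAt him4 him0 hL0
  have hsecond := integral_re_sq_add_integral_im_sq hξ2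
  have hfourth := integral_re_pow_four_add_integral_im_pow_four_le hξ4
  have hloss : 4 * (∫ ω, (ξ ω).re ^ 4 ∂P + ∫ ω, (ξ ω).im ^ 4 ∂P) / L ^ 2 ≤ 1 / 2 := by
    rw [div_le_iff₀ (by positivity)]; linarith
  rw [mul_add, add_div] at hloss
  rw [integral_norm_truncXi_sq hξ2 L]
  linarith

theorem truncation_variance_ge_half
    {Ω : Type*} [MeasurableSpace Ω] (P : Measure Ω) [IsProbabilityMeasure P]
    (ξ : Ω → ℂ) (hmeas : AEMeasurable ξ P)
    (hmean : ∫ ω, ξ ω ∂P = 0)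
    (hvar : ∫ ω, ‖ξ ω‖ ^ 2 ∂P = 1)
    (hindep : IndepFun (fun ω => (ξ ω).re) (fun ω => (ξ ω).im) P)
    (h4 : Integrable (fun ω => ‖ξ ω‖ ^ 4) P)
    (L : ℝ) (hL : Real.sqrt (8 * ∫ ω, ‖ξ ω‖ ^ 4 ∂P) ≤ L) :
    (1 : ℝ) / 2 ≤ ∫ ω, ‖truncXi P L ξ ω‖ ^ 2 ∂P :=
  truncation_variance_ge_half_general P ξ hmeas hmean hvar h4 L hL
end

section
/- Let $\mu$ be a Borel probability measure on $[0, \infty)$ and for each $n \ge 1$ let $\mu_n = \frac{1}{n}\sum_{i=1}^n \delta_{\lambda_{n,i}}$ with $\lambda_{n,i} \ge 0$. Let $m_n$ and $m$ be the Stieltjes transforms of $\mu_n$ and $\mu$. Assume (i) $\mu_n \to \mu$ weakly, (ii) there is $c > 0$ with $\mu([0,c]) = 0$, and (iii) $\sup_{E \in [0,c]} |m_n(E + i n^{-1/2}) - m(E + i n^{-1/2})| = o(n^{-1/2})$. Then there exists $n_0 \ge 1$ such that $\mu_n([0, c/2]) = 0$ for all $n > n_0$. -/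
open MeasureTheory Filter

lemma stsa_term_im (p q d η : ℝ) :
    (((p:ℂ) + (q:ℂ)*Complex.I) * ((d:ℂ) - Complex.I*(η:ℂ))⁻¹).im
      = (p*η + q*d)/(d^2+η^2) := by
  rw [← div_eq_mul_inv, Complex.div_im]
  simp [Complex.normSq_apply]
  ring

lemma stsa_kernel_iden (d η : ℝ) (h1 : (0:ℝ) < d^2+η^2) (h2 : (0:ℝ) < (d-η/2)^2+η^2)
    (h3 : (0:ℝ) < (d-η)^2+η^2) :
    ((-753)*η + 320*d)/(d^2+η^2)
      + (1088*η + (-640)*(d-η/2))/((d-η/2)^2+η^2)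
      + ((-335)*η + 320*(d-η))/((d-η)^2+η^2)
      = (η^2*(578*d+51*η)*(d-3/2*η)^2)/((d^2+η^2)*(((d-η/2)^2+η^2)*((d-η)^2+η^2))) := by
  rw [div_add_div _ _ h1.ne' h2.ne', div_add_div _ _ (mul_pos h1 h2).ne' h3.ne',
    div_eq_div_iff (by positivity) (by positivity)]
  ring

lemma stsa_kernel_nonneg (d η : ℝ) (hd : 0 ≤ d) (hη : 0 < η) :
    0 ≤ ((-753)*η + 320*d)/(d^2+η^2)
      + (1088*η + (-640)*(d-η/2))/((d-η/2)^2+η^2)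
      + ((-335)*η + 320*(d-η))/((d-η)^2+η^2) := by
  rw [stsa_kernel_iden d η (by positivity) (by positivity) (by positivity)]
  apply div_nonneg _ (by positivity)
  exact mul_nonneg (mul_nonneg (by positivity) (by linarith)) (sq_nonneg _)

lemma stsa_kernel_bound (c d η : ℝ) (hc : 0 < c) (hd : c/2 ≤ d) (hη : 0 < η) (hηs : η ≤ c/8) :
    ((-753)*η + 320*d)/(d^2+η^2)
      + (1088*η + (-640)*(d-η/2))/((d-η/2)^2+η^2)
      + ((-335)*η + 320*(d-η))/((d-η)^2+η^2) ≤ 16000/c^3*η^2 := by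
  have hd0 : 0 < d := by linarith
  have h4 : 4*η ≤ d := by linarith
  rw [stsa_kernel_iden d η (by positivity) (by positivity) (by positivity)]
  have ha : 578*d+51*η ≤ 591*d := by linarith
  have hb : (d-3/2*η)^2 ≤ d^2 := by nlinarith
  have hnum : η^2*(578*d+51*η)*(d-3/2*η)^2 ≤ 591*d^3*η^2 := by
    calc η^2*(578*d+51*η)*(d-3/2*η)^2 ≤ η^2*(591*d)*d^2 :=
          mul_le_mul (mul_le_mul_of_nonneg_left ha (sq_nonneg η)) hb (sq_nonneg _) (by positivity)
      _ = 591*d^3*η^2 := by ring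
  have b2' : 7/8*d ≤ d - η/2 := by linarith
  have b3' : 3/4*d ≤ d - η := by linarith
  have b1 : d^2 ≤ d^2+η^2 := by nlinarith
  have b2 : 49/64*d^2 ≤ (d-η/2)^2+η^2 := by
    nlinarith [mul_le_mul b2' b2' (by linarith) (by linarith : (0:ℝ) ≤ d - η/2)]
  have b3 : 9/16*d^2 ≤ (d-η)^2+η^2 := by
    nlinarith [mul_le_mul b3' b3' (by linarith) (by linarith : (0:ℝ) ≤ d - η)]
  have hden : (441/1024)*d^6 ≤ (d^2+η^2)*(((d-η/2)^2+η^2)*((d-η)^2+η^2)) := by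
    calc (441/1024)*d^6 = d^2*((49/64*d^2)*(9/16*d^2)) := by ring
      _ ≤ (d^2+η^2)*(((d-η/2)^2+η^2)*((d-η)^2+η^2)) :=
          mul_le_mul b1 (mul_le_mul b2 b3 (by positivity) (by positivity)) (by positivity)
            (by positivity)
  have hc3 : c^3 ≤ 8*d^3 := by
    have h := pow_le_pow_left₀ hc.le (show c ≤ 2*d by linarith) 3
    calc c^3 ≤ (2*d)^3 := h
      _ = 8*d^3 := by ring
  have hden0 : (0:ℝ) < (d^2+η^2)*(((d-η/2)^2+η^2)*((d-η)^2+η^2)) := by positivity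
  rw [div_le_iff₀ hden0]
  have e1 : 16000/c^3*η^2 * ((441/1024)*d^6)
      ≤ 16000/c^3*η^2 * ((d^2+η^2)*(((d-η/2)^2+η^2)*((d-η)^2+η^2))) :=
    mul_le_mul_of_nonneg_left hden (by positivity)
  have e2 : 591*d^3*η^2 ≤ 16000/c^3*η^2 * ((441/1024)*d^6) := by
    rw [div_mul_eq_mul_div, div_mul_eq_mul_div, le_div_iff₀ (by positivity)]
    nlinarith [mul_le_mul_of_nonneg_left hc3 (show (0:ℝ) ≤ 591*η^2*d^3 by positivity),
      sq_nonneg (η*d^3), sq_nonneg (η*d), sq_nonneg d]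
  linarith

lemma stsa_atom_value (η : ℝ) (hη : 0 < η) :
    ((-753)*η + 320*(0:ℝ))/((0:ℝ)^2+η^2)
      + (1088*η + (-640)*((0:ℝ)-η/2))/(((0:ℝ)-η/2)^2+η^2)
      + ((-335)*η + 320*((0:ℝ)-η))/(((0:ℝ)-η)^2+η^2) = (459/10)/η := by
  have hηne : η ≠ 0 := hη.ne'
  field_simp
  ring

theorem stieltjes_transform_no_small_atoms
    (μ : Measure ℝ) [IsProbabilityMeasure μ] (hsupp : μ (Set.Iio 0) = 0)
    (lam : ℕ → ℕ → ℝ) (hlam : ∀ n i, 0 ≤ lam n i)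
    -- (i) weak convergence of the empirical measures μₙ to μ
    (hweak : ∀ f : BoundedContinuousFunction ℝ ℝ,
      Tendsto (fun n : ℕ => (1 / n : ℝ) * ∑ i ∈ Finset.range n, f (lam n i))
        atTop (nhds (∫ x, f x ∂μ)))
    -- (ii) μ puts no mass on [0, c]
    (c : ℝ) (hc : 0 < c) (hzero : μ (Set.Icc 0 c) = 0)
    -- (iii) uniform o(n^{-1/2}) closeness of the Stieltjes transforms on [0, c]
    (hstieltjes : ∀ ε > 0, ∀ᶠ n : ℕ in atTop, ∀ E ∈ Set.Icc (0 : ℝ) c,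
      ‖((1 / n : ℂ) * ∑ i ∈ Finset.range n,
              ((lam n i : ℂ) - ((E : ℂ) + Complex.I * ((Real.sqrt n)⁻¹ : ℝ)))⁻¹
            - ∫ x, ((x : ℂ) - ((E : ℂ) + Complex.I * ((Real.sqrt n)⁻¹ : ℝ)))⁻¹ ∂μ)‖
        ≤ ε / Real.sqrt n) :
    ∃ n₀ : ℕ, ∀ n > n₀, ∀ i < n, c / 2 < lam n i := by
  obtain ⟨N₁, hN₁⟩ := eventually_atTop.mp (hstieltjes (1/200) (by norm_num))
  set K : ℝ := 8/c + 1000/c^3 with hK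
  have hKpos : 0 < K := by positivity
  refine ⟨N₁ + Nat.ceil (K^2) + 1, fun n hn i hin => ?_⟩
  by_contra hcon
  push_neg at hcon
  have hne : (Finset.range n).Nonempty := ⟨i, Finset.mem_range.mpr hin⟩
  obtain ⟨i₀, hi₀, hmin⟩ := Finset.exists_min_image (Finset.range n) (lam n) hne
  set lm := lam n i₀ with hlm
  have hlm0 : 0 ≤ lm := hlam n i₀
  have hlmc : lm ≤ c/2 := le_trans (hmin i (Finset.mem_range.mpr hin)) hcon
  have hnN : n ≥ N₁ := by omega
  have hnK : (K^2 : ℝ) ≤ (n:ℝ) := by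
    calc (K^2:ℝ) ≤ (Nat.ceil (K^2) : ℝ) := Nat.le_ceil _
      _ ≤ n := by exact_mod_cast Nat.le_of_lt (by omega)
  have hn0 : (0:ℝ) < n := lt_of_lt_of_le (by positivity) hnK
  have hsq : 0 < Real.sqrt n := Real.sqrt_pos.mpr hn0
  have hKsq : K ≤ Real.sqrt n := by
    have h := Real.sqrt_le_sqrt hnK
    rwa [Real.sqrt_sq hKpos.le] at h
  set η : ℝ := (Real.sqrt n)⁻¹ with hηdef
  have hη : 0 < η := inv_pos.mpr hsq
  have hηne : η ≠ 0 := hη.ne'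
  have hη8 : η ≤ c/8 := by
    have h1 : 8/c ≤ Real.sqrt n := by
      refine le_trans ?_ hKsq
      rw [hK]
      have := div_pos (show (0:ℝ) < 1000 by norm_num) (pow_pos hc 3)
      linarith
    calc η ≤ (8/c)⁻¹ := inv_anti₀ (by positivity) h1
      _ = c/8 := by rw [inv_div]
  have hη1000 : η ≤ c^3/1000 := by
    have h1 : 1000/c^3 ≤ Real.sqrt n := by
      refine le_trans ?_ hKsq
      rw [hK]
      have := div_pos (show (0:ℝ) < 8 by norm_num) hc
      linarith
    calc η ≤ (1000/c^3)⁻¹ := inv_anti₀ (by positivity) h1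
      _ = c^3/1000 := by rw [inv_div]
  have hη2 : η^2 = 1/(n:ℝ) := by
    rw [hηdef, inv_pow, Real.sq_sqrt hn0.le, one_div]
  -- the three evaluation points
  have hE1 : lm ∈ Set.Icc (0:ℝ) c := ⟨hlm0, by linarith⟩
  have hE2 : lm + η/2 ∈ Set.Icc (0:ℝ) c := ⟨by linarith, by linarith⟩
  have hE3 : lm + η ∈ Set.Icc (0:ℝ) c := ⟨by linarith, by linarith⟩
  have hb1 := hN₁ n hnN lm hE1
  have hb2 := hN₁ n hnN (lm + η/2) hE2
  have hb3 := hN₁ n hnN (lm + η) hE3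
  rw [← hηdef] at hb1 hb2 hb3
  set c₁ : ℂ := ((-753:ℝ):ℂ) + ((320:ℝ):ℂ)*Complex.I with hc₁
  set c₂ : ℂ := ((1088:ℝ):ℂ) + ((-640:ℝ):ℂ)*Complex.I with hc₂
  set c₃ : ℂ := ((-335:ℝ):ℂ) + ((320:ℝ):ℂ)*Complex.I with hc₃
  set S1 : ℂ := (1 / (n:ℂ)) * ∑ j ∈ Finset.range n,
      ((lam n j : ℂ) - ((lm : ℂ) + Complex.I * (η:ℂ)))⁻¹ with hS1
  set M1 : ℂ := ∫ x, ((x : ℂ) - ((lm : ℂ) + Complex.I * (η:ℂ)))⁻¹ ∂μ with hM1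
  set S2 : ℂ := (1 / (n:ℂ)) * ∑ j ∈ Finset.range n,
      ((lam n j : ℂ) - (((lm + η/2 : ℝ) : ℂ) + Complex.I * (η:ℂ)))⁻¹ with hS2
  set M2 : ℂ := ∫ x, ((x : ℂ) - (((lm + η/2 : ℝ) : ℂ) + Complex.I * (η:ℂ)))⁻¹ ∂μ with hM2
  set S3 : ℂ := (1 / (n:ℂ)) * ∑ j ∈ Finset.range n,
      ((lam n j : ℂ) - (((lm + η : ℝ) : ℂ) + Complex.I * (η:ℂ)))⁻¹ with hS3
  set M3 : ℂ := ∫ x, ((x : ℂ) - (((lm + η : ℝ) : ℂ) + Complex.I * (η:ℂ)))⁻¹ ∂μ with hM3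
  have hb1' : ‖S1 - M1‖ ≤ η/200 := by
    refine le_trans hb1 (le_of_eq ?_)
    rw [hηdef]; ring
  have hb2' : ‖S2 - M2‖ ≤ η/200 := by
    refine le_trans hb2 (le_of_eq ?_)
    rw [hηdef]; ring
  have hb3' : ‖S3 - M3‖ ≤ η/200 := by
    refine le_trans hb3 (le_of_eq ?_)
    rw [hηdef]; ring
  -- coercion rearrangements
  have e1 : ∀ x : ℝ, (x:ℂ) - ((lm:ℂ) + Complex.I*(η:ℂ))
      = (((x - lm : ℝ)):ℂ) - Complex.I*(η:ℂ) := fun x => by push_cast; ring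
  have e2 : ∀ x : ℝ, (x:ℂ) - (((lm + η/2 : ℝ):ℂ) + Complex.I*(η:ℂ))
      = ((((x - lm) - η/2 : ℝ)):ℂ) - Complex.I*(η:ℂ) := fun x => by push_cast; ring
  have e3 : ∀ x : ℝ, (x:ℂ) - (((lm + η : ℝ):ℂ) + Complex.I*(η:ℂ))
      = ((((x - lm) - η : ℝ)):ℂ) - Complex.I*(η:ℂ) := fun x => by push_cast; ring
  have hcombo_im : ∀ x : ℝ,
      (c₁ * ((x:ℂ) - ((lm:ℂ) + Complex.I*(η:ℂ)))⁻¹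
       + c₂ * ((x:ℂ) - (((lm + η/2 : ℝ):ℂ) + Complex.I*(η:ℂ)))⁻¹
       + c₃ * ((x:ℂ) - (((lm + η : ℝ):ℂ) + Complex.I*(η:ℂ)))⁻¹).im
      = ((-753)*η + 320*(x - lm))/((x - lm)^2+η^2)
        + (1088*η + (-640)*((x - lm)-η/2))/(((x - lm)-η/2)^2+η^2)
        + ((-335)*η + 320*((x - lm)-η))/(((x - lm)-η)^2+η^2) := by
    intro x
    rw [e1 x, e2 x, e3 x, hc₁, hc₂, hc₃, Complex.add_im, Complex.add_im,
      stsa_term_im, stsa_term_im, stsa_term_im]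
  -- part 1 : lower bound on the empirical part
  set F : ℕ → ℝ := fun j =>
      (c₁ * ((lam n j:ℂ) - ((lm:ℂ) + Complex.I*(η:ℂ)))⁻¹
       + c₂ * ((lam n j:ℂ) - (((lm + η/2 : ℝ):ℂ) + Complex.I*(η:ℂ)))⁻¹
       + c₃ * ((lam n j:ℂ) - (((lm + η : ℝ):ℂ) + Complex.I*(η:ℂ)))⁻¹).im with hF
  have inner_nonneg : ∀ j ∈ Finset.range n, 0 ≤ F j := by
    intro j hj
    rw [hF]
    simp only
    rw [hcombo_im (lam n j)]
    exact stsa_kernel_nonneg _ _ (sub_nonneg.mpr (hmin j hj)) hη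
  have hatom : F i₀ = (459/10)/η := by
    rw [hF]
    simp only
    rw [hcombo_im (lam n i₀)]
    have h00 : lam n i₀ - lm = 0 := by rw [hlm, sub_self]
    rw [h00]
    exact stsa_atom_value η hη
  have hsum_expand : c₁*S1 + c₂*S2 + c₃*S3
      = (1 / (n:ℂ)) * ∑ j ∈ Finset.range n,
        (c₁ * ((lam n j:ℂ) - ((lm:ℂ) + Complex.I*(η:ℂ)))⁻¹
         + c₂ * ((lam n j:ℂ) - (((lm + η/2 : ℝ):ℂ) + Complex.I*(η:ℂ)))⁻¹
         + c₃ * ((lam n j:ℂ) - (((lm + η : ℝ):ℂ) + Complex.I*(η:ℂ)))⁻¹) := by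
    rw [hS1, hS2, hS3]
    simp only [Finset.mul_sum, ← Finset.sum_add_distrib]
    exact Finset.sum_congr rfl fun j _ => by ring
  have hri : ∀ (r : ℝ) (z : ℂ), ((r:ℂ)*z).im = r * z.im := fun r z => by
    simp [Complex.mul_im]
  have him : (c₁*S1 + c₂*S2 + c₃*S3).im = (1/(n:ℝ)) * ∑ j ∈ Finset.range n, F j := by
    rw [hsum_expand, show ((1:ℂ)/(n:ℂ)) = (((1/(n:ℝ)):ℝ):ℂ) by push_cast; ring,
      hri, Complex.im_sum]
  have hlow : (459/10)*η ≤ (c₁*S1 + c₂*S2 + c₃*S3).im := by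
    rw [him]
    have hsingle : F i₀ ≤ ∑ j ∈ Finset.range n, F j :=
      Finset.single_le_sum inner_nonneg hi₀
    have hFsum : (459/10)/η ≤ ∑ j ∈ Finset.range n, F j := hatom ▸ hsingle
    calc (459/10)*η = (1/(n:ℝ)) * ((459/10)/η) := by
          rw [← hη2]; field_simp
      _ ≤ (1/(n:ℝ)) * ∑ j ∈ Finset.range n, F j :=
          mul_le_mul_of_nonneg_left hFsum (by positivity)
  -- part 2 : the μ-part
  have hcont : ∀ E : ℝ, Continuous (fun x:ℝ => ((x:ℂ) - ((E:ℂ) + Complex.I*(η:ℂ)))⁻¹) := by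
    intro E
    apply Continuous.inv₀ (Complex.continuous_ofReal.sub continuous_const)
    intro x
    refine sub_ne_zero.mpr (fun h => hηne ?_)
    have h' : (0:ℝ) = η := by simpa using congrArg Complex.im h
    exact h'.symm
  have hint : ∀ E : ℝ, Integrable (fun x:ℝ => ((x:ℂ) - ((E:ℂ) + Complex.I*(η:ℂ)))⁻¹) μ := by
    intro E
    refine (integrable_const (η⁻¹)).mono' ((hcont E).aestronglyMeasurable)
      (Filter.Eventually.of_forall fun x => ?_)
    rw [norm_inv]
    have himx : ((x:ℂ) - ((E:ℂ) + Complex.I*(η:ℂ))).im = -η := by simp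
    have h1 : η ≤ ‖(x:ℂ) - ((E:ℂ) + Complex.I*(η:ℂ))‖ := by
      have h2 := Complex.abs_im_le_norm ((x:ℂ) - ((E:ℂ) + Complex.I*(η:ℂ)))
      rwa [himx, abs_neg, abs_of_pos hη] at h2
    exact inv_anti₀ hη h1
  have hint1 : Integrable (fun x:ℝ => c₁ * ((x:ℂ) - ((lm:ℂ) + Complex.I*(η:ℂ)))⁻¹) μ :=
    (hint lm).const_mul c₁
  have hint2 : Integrable
      (fun x:ℝ => c₂ * ((x:ℂ) - (((lm + η/2 : ℝ):ℂ) + Complex.I*(η:ℂ)))⁻¹) μ :=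
    (hint (lm + η/2)).const_mul c₂
  have hint3 : Integrable
      (fun x:ℝ => c₃ * ((x:ℂ) - (((lm + η : ℝ):ℂ) + Complex.I*(η:ℂ)))⁻¹) μ :=
    (hint (lm + η)).const_mul c₃
  have hint12 : Integrable (fun x:ℝ =>
      c₁ * ((x:ℂ) - ((lm:ℂ) + Complex.I*(η:ℂ)))⁻¹
       + c₂ * ((x:ℂ) - (((lm + η/2 : ℝ):ℂ) + Complex.I*(η:ℂ)))⁻¹) μ := hint1.add hint2
  have hintc : Integrable (fun x:ℝ =>
      c₁ * ((x:ℂ) - ((lm:ℂ) + Complex.I*(η:ℂ)))⁻¹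
       + c₂ * ((x:ℂ) - (((lm + η/2 : ℝ):ℂ) + Complex.I*(η:ℂ)))⁻¹
       + c₃ * ((x:ℂ) - (((lm + η : ℝ):ℂ) + Complex.I*(η:ℂ)))⁻¹) μ :=
    hint12.add hint3
  have hMsum : c₁*M1 + c₂*M2 + c₃*M3 = ∫ x, (c₁ * ((x:ℂ) - ((lm:ℂ) + Complex.I*(η:ℂ)))⁻¹
       + c₂ * ((x:ℂ) - (((lm + η/2 : ℝ):ℂ) + Complex.I*(η:ℂ)))⁻¹
       + c₃ * ((x:ℂ) - (((lm + η : ℝ):ℂ) + Complex.I*(η:ℂ)))⁻¹) ∂μ := by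
    rw [integral_add hint12 hint3, integral_add hint1 hint2,
      integral_const_mul, integral_const_mul, integral_const_mul, hM1, hM2, hM3]
  have him2 : (c₁*M1 + c₂*M2 + c₃*M3).im = ∫ x, (c₁ * ((x:ℂ) - ((lm:ℂ) + Complex.I*(η:ℂ)))⁻¹
       + c₂ * ((x:ℂ) - (((lm + η/2 : ℝ):ℂ) + Complex.I*(η:ℂ)))⁻¹
       + c₃ * ((x:ℂ) - (((lm + η : ℝ):ℂ) + Complex.I*(η:ℂ)))⁻¹).im ∂μ := by
    have h := integral_im hintc
    rw [RCLike.im_eq_complex_im] at h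
    rw [hMsum, ← h]
  have hIic : μ (Set.Iic c) = 0 := by
    refine measure_mono_null (fun x hx => ?_) (measure_union_null hsupp hzero)
    rcases lt_or_ge x 0 with h|h
    · exact Or.inl h
    · exact Or.inr ⟨h, hx⟩
  have hae : ∀ᵐ x ∂μ, c < x := by
    refine ae_iff.mpr ?_
    have hset : {x : ℝ | ¬ c < x} = Set.Iic c := by
      ext x; simp [not_lt, Set.mem_Iic]
    rw [hset]; exact hIic
  have hptw : ∀ᵐ (x:ℝ) ∂μ, ‖(c₁ * ((x:ℂ) - ((lm:ℂ) + Complex.I*(η:ℂ)))⁻¹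
       + c₂ * ((x:ℂ) - (((lm + η/2 : ℝ):ℂ) + Complex.I*(η:ℂ)))⁻¹
       + c₃ * ((x:ℂ) - (((lm + η : ℝ):ℂ) + Complex.I*(η:ℂ)))⁻¹).im‖ ≤ 16000/c^3*η^2 := by
    refine hae.mono fun x hx => ?_
    rw [hcombo_im x, Real.norm_eq_abs,
      abs_of_nonneg (stsa_kernel_nonneg _ _ (by linarith) hη)]
    exact stsa_kernel_bound c (x - lm) η hc (by linarith) hη hη8
  have key2 : |(c₁*M1 + c₂*M2 + c₃*M3).im| ≤ 16000/c^3*η^2 := by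
    rw [him2]
    have h := norm_integral_le_of_norm_le_const (μ := μ) hptw
    simpa [Real.norm_eq_abs, measure_univ] using h
  -- part 3 : the hypothesis bound
  have habs1 : ‖c₁‖ ≤ 1073 := by
    refine le_trans (Complex.norm_le_abs_re_add_abs_im c₁) ?_
    have h1 : c₁.re = -753 := by rw [hc₁]; simp
    have h2 : c₁.im = 320 := by rw [hc₁]; simp
    rw [h1, h2, abs_of_nonpos (by norm_num), abs_of_nonneg (by norm_num)]
    norm_num
  have habs2 : ‖c₂‖ ≤ 1728 := by
    refine le_trans (Complex.norm_le_abs_re_add_abs_im c₂) ?_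
    have h1 : c₂.re = 1088 := by rw [hc₂]; simp
    have h2 : c₂.im = -640 := by rw [hc₂]; simp
    rw [h1, h2, abs_of_nonneg (by norm_num), abs_of_nonpos (by norm_num)]
    norm_num
  have habs3 : ‖c₃‖ ≤ 655 := by
    refine le_trans (Complex.norm_le_abs_re_add_abs_im c₃) ?_
    have h1 : c₃.re = -335 := by rw [hc₃]; simp
    have h2 : c₃.im = 320 := by rw [hc₃]; simp
    rw [h1, h2, abs_of_nonpos (by norm_num), abs_of_nonneg (by norm_num)]
    norm_num
  have key3 : ‖c₁*(S1-M1) + c₂*(S2-M2) + c₃*(S3-M3)‖ ≤ 3456/200*η := by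
    have t1 : ‖c₁*(S1-M1)‖ ≤ 1073*(η/200) := by
      rw [norm_mul]
      exact mul_le_mul habs1 hb1' (norm_nonneg _) (by norm_num)
    have t2 : ‖c₂*(S2-M2)‖ ≤ 1728*(η/200) := by
      rw [norm_mul]
      exact mul_le_mul habs2 hb2' (norm_nonneg _) (by norm_num)
    have t3 : ‖c₃*(S3-M3)‖ ≤ 655*(η/200) := by
      rw [norm_mul]
      exact mul_le_mul habs3 hb3' (norm_nonneg _) (by norm_num)
    calc ‖c₁*(S1-M1) + c₂*(S2-M2) + c₃*(S3-M3)‖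
        ≤ ‖c₁*(S1-M1) + c₂*(S2-M2)‖ + ‖c₃*(S3-M3)‖ :=
          norm_add_le _ _
      _ ≤ (‖c₁*(S1-M1)‖ + ‖c₂*(S2-M2)‖) + ‖c₃*(S3-M3)‖ :=
          add_le_add_left (norm_add_le _ _) _
      _ ≤ (1073*(η/200) + 1728*(η/200)) + 655*(η/200) :=
          add_le_add (add_le_add t1 t2) t3
      _ = 3456/200*η := by ring
  -- combine everything
  have hsplit : c₁*S1 + c₂*S2 + c₃*S3
      = (c₁*(S1-M1) + c₂*(S2-M2) + c₃*(S3-M3)) + (c₁*M1 + c₂*M2 + c₃*M3) := by ring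
  have h1 : (c₁*(S1-M1) + c₂*(S2-M2) + c₃*(S3-M3)).im ≤ 3456/200*η :=
    le_trans (Complex.im_le_norm _) key3
  have h2 : (c₁*M1 + c₂*M2 + c₃*M3).im ≤ 16000/c^3*η^2 :=
    le_trans (le_abs_self _) key2
  have hfin1 : (459/10)*η ≤ 3456/200*η + 16000/c^3*η^2 := by
    calc (459/10)*η ≤ (c₁*S1 + c₂*S2 + c₃*S3).im := hlow
      _ = (c₁*(S1-M1) + c₂*(S2-M2) + c₃*(S3-M3)).im + (c₁*M1 + c₂*M2 + c₃*M3).im := by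
          rw [hsplit, Complex.add_im]
      _ ≤ 3456/200*η + 16000/c^3*η^2 := add_le_add h1 h2
  have hlast : 16000/c^3*η^2 ≤ 16*η := by
    have hc3pos : (0:ℝ) < c^3 := pow_pos hc 3
    have h1' : 16000/c^3*η ≤ 16 := by
      rw [div_mul_eq_mul_div, div_le_iff₀ hc3pos]
      linarith
    calc 16000/c^3*η^2 = (16000/c^3*η)*η := by ring
      _ ≤ 16*η := mul_le_mul_of_nonneg_right h1' hη.le
  linarith
end

section
/- Let $k \ge 2$ be an even integer. Consider directed path graphs on vertex set $\{(t, i_t) : 1 \le t \le k+1\}$ with edges from $(t, i_t)$ to $(t+1, i_{t+1})$, where $i_t \in \{1, \ldots, n\}$, and where the graph is canonical: if the graph visits $(t, i_t)$ then for every $0 < i < i_t$ there exists $s < t$ with the graph visiting $(s, i)$. Call two edges parallel if they span the same ordered pair of heights $(i_t, i_{t+1}) = (i_{t'}, i_{t'+1})$ at distinct times. Then there is exactly one canonical path graph with maximal height $k/2$ in which every edge is parallel to exactly one other edge, namely the one with height sequence $(1, 2, \ldots, k/2, 1, 2, \ldots, k/2, 1)$. -/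
/-- A height sequence `h : Fin (k+1) → ℕ` (with heights at least `1`) is canonical if whenever
the path visits a vertex of height `h t`, every smaller positive height has been visited at an
earlier time. -/
def CanonicalPath {k : ℕ} (h : Fin (k + 1) → ℕ) : Prop :=
  (∀ t, 1 ≤ h t) ∧ ∀ t : Fin (k + 1), ∀ i : ℕ, 0 < i → i < h t → ∃ s < t, h s = i

/-- Edges `t` and `t'` of the path with height sequence `h` are (time-translate) parallel:
they are distinct and span the same ordered pair of heights. -/
def ParallelEdges {k : ℕ} (h : Fin (k + 1) → ℕ) (t t' : Fin k) : Prop :=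
  t ≠ t' ∧ h t.castSucc = h t'.castSucc ∧ h t.succ = h t'.succ


/-!
Each ordered pair of heights spanned by an edge is spanned by exactly two of the `k` edges, so
there are `k / 2` such pairs, and at every height the numbers of departing and of arriving edges
are even. Comparing departures with arrivals height by height shows that the walk ends at its
initial height `1`, so every height is left by some edge; as there are as many pairs as heights,
each height is left towards a single successor. The path is therefore an orbit `1, f 1, f² 1, …`
of a map `f` that returns to `1`, hence periodic with period the number `k / 2` of heights, and
canonicity forces its first period to be `1, …, k / 2`.
-/

open Finset Function

section Fibers

variable {ι β : Type*} [Fintype ι] [DecidableEq β]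

theorem card_filter_eq_eq_two_of_existsUnique {E : ι → β}
    (hE : ∀ t, ∃! t', t ≠ t' ∧ E t = E t') (t : ι) : #{s | E s = E t} = 2 := by
  classical
  obtain ⟨t', ⟨hne, heq⟩, huniq⟩ := hE t
  rw [card_eq_two]
  refine ⟨t, t', hne, ?_⟩
  ext s
  simp only [mem_filter, mem_univ, true_and, mem_insert, mem_singleton]
  refine ⟨fun hs => or_iff_not_imp_left.2 fun hst => huniq s ⟨Ne.symm hst, hs.symm⟩, ?_⟩
  rintro (rfl | rfl)
  exacts [rfl, heq.symm]

theorem card_filter_comp_eq_two_mul {E : ι → β} (hE : ∀ t, #{s | E s = E t} = 2)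
    (P : β → Prop) [DecidablePred P] :
    #{t | P (E t)} = 2 * #{l ∈ univ.image E | P l} := by
  have hmaps : Set.MapsTo E ({t | P (E t)} : Finset ι) ({l ∈ univ.image E | P l} : Finset β) :=
    fun t ht => by simp_all
  rw [card_eq_sum_card_fiberwise hmaps, mul_comm, ← smul_eq_mul, ← sum_const]
  refine sum_congr rfl fun l hl => ?_
  obtain ⟨⟨t, -, rfl⟩, hP⟩ : (∃ t ∈ univ, E t = l) ∧ P l := by simpa using hl
  rw [← hE t]
  congr 1
  ext s
  simp only [mem_filter, mem_univ, true_and, and_iff_right_iff_imp]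
  exact fun hs => hs ▸ hP

end Fibers

def edgeHeights {α : Type*} {n : ℕ} (g : Fin (n + 1) → α) (t : Fin n) : α × α :=
  (g t.castSucc, g t.succ)

theorem parallelEdges_iff {k : ℕ} {h : Fin (k + 1) → ℕ} {t t' : Fin k} :
    ParallelEdges h t t' ↔ t ≠ t' ∧ edgeHeights h t = edgeHeights h t' := by
  simp [ParallelEdges, edgeHeights]

section Walks

variable {α : Type*} [DecidableEq α] {n : ℕ}

theorem Fin.card_filter_castSucc_add_ite_last (g : Fin (n + 1) → α) (a : α) :
    #{t : Fin n | g t.castSucc = a} + (if g (Fin.last n) = a then 1 else 0) =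
      #{t : Fin n | g t.succ = a} + (if g 0 = a then 1 else 0) := by
  have e₁ := Fin.sum_univ_castSucc fun t => if g t = a then 1 else 0
  have e₂ := Fin.sum_univ_succ fun t => if g t = a then 1 else 0
  simp only [card_filter]
  omega

theorem apply_last_eq_apply_zero_of_even {g : Fin (n + 1) → α}
    (hdep : ∀ a, Even #{t : Fin n | g t.castSucc = a})
    (harr : ∀ a, Even #{t : Fin n | g t.succ = a}) : g (Fin.last n) = g 0 := by
  by_contra hne
  have hwalk := Fin.card_filter_castSucc_add_ite_last g (g 0)
  rw [if_neg hne, if_pos rfl, add_zero] at hwalk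
  exact Nat.not_even_iff_odd.2 (hwalk ▸ (harr (g 0)).add_one) (hdep (g 0))

theorem image_castSucc_eq_image_of_apply_last_eq_apply_zero (hn : 0 < n) {g : Fin (n + 1) → α}
    (hg : g (Fin.last n) = g 0) :
    univ.image (fun t : Fin n => g t.castSucc) = univ.image g := by
  refine Subset.antisymm (image_subset_iff.2 fun t _ => mem_image_of_mem g (mem_univ _)) ?_
  refine image_subset_iff.2 fun t _ => ?_
  induction t using Fin.lastCases with
  | last => exact mem_image.2 ⟨⟨0, hn⟩, mem_univ _, hg ▸ rfl⟩
  | cast t => exact mem_image_of_mem _ (mem_univ t)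

theorem apply_succ_eq_of_apply_castSucc_eq_of_card_le {g : Fin (n + 1) → α}
    (hsrc : univ.image (fun t : Fin n => g t.castSucc) = univ.image g)
    (hcard : #(univ.image (edgeHeights g)) ≤ #(univ.image g))
    {s t : Fin n} (hst : g s.castSucc = g t.castSucc) : g s.succ = g t.succ := by
  have hmaps : Set.MapsTo Prod.fst (univ.image (edgeHeights g) : Set (α × α))
      (univ.image g) := by
    intro l hl
    obtain ⟨t, -, rfl⟩ := mem_image.1 (mem_coe.1 hl)
    exact mem_image_of_mem g (mem_univ _)
  have hsurj : Set.SurjOn Prod.fst (univ.image (edgeHeights g) : Set (α × α))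
      (univ.image g) := by
    intro a ha
    rw [mem_coe, ← hsrc, mem_image] at ha
    obtain ⟨t, -, rfl⟩ := ha
    exact ⟨edgeHeights g t, by simp, rfl⟩
  have hinj := injOn_of_surjOn_of_card_le Prod.fst hmaps hsurj hcard
  exact congrArg Prod.snd (hinj (by simp) (by simp) hst : edgeHeights g s = edgeHeights g t)

theorem exists_apply_eq_iterate_of_apply_succ_eq {g : Fin (n + 1) → α}
    (hdet : ∀ s t : Fin n, g s.castSucc = g t.castSucc → g s.succ = g t.succ) :
    ∃ f : α → α, ∀ t : Fin (n + 1), g t = f^[t] (g 0) := by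
  classical
  refine ⟨fun a => if ha : ∃ s : Fin n, g s.castSucc = a then g ha.choose.succ else a,
    fun t => ?_⟩
  induction t using Fin.induction with
  | zero => rfl
  | succ t ih =>
    have hex : ∃ s : Fin n, g s.castSucc = g t.castSucc := ⟨t, rfl⟩
    rw [Fin.val_succ, iterate_succ_apply', ← Fin.val_castSucc, ← ih, dif_pos hex]
    exact (hdet _ _ hex.choose_spec).symm

end Walks

theorem card_image_range_iterate {α : Type*} [DecidableEq α] {f : α → α} {x : α}
    (hx : 0 < minimalPeriod f x) {N : ℕ} (hN : minimalPeriod f x ≤ N) :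
    #((range N).image (f^[·] x)) = minimalPeriod f x := by
  have himage : (range N).image (f^[·] x) = (range (minimalPeriod f x)).image (f^[·] x) := by
    refine Subset.antisymm (image_subset_iff.2 fun t _ => mem_image.2 ?_)
      (image_subset_image (range_subset_range.2 hN))
    exact ⟨t % minimalPeriod f x, mem_range.2 (Nat.mod_lt _ hx), iterate_mod_minimalPeriod_eq⟩
  rw [himage, card_image_of_injOn (by simpa using iterate_injOn_Iio_minimalPeriod), card_range]

theorem eq_add_one_of_injOn_of_canonical {u : ℕ → ℕ} {m : ℕ}
    (hcan : ∀ t < m, ∀ i, 0 < i → i < u t → ∃ s < t, u s = i)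
    (hpos : ∀ t < m, 1 ≤ u t) (hinj : Set.InjOn u (Set.Iio m)) : ∀ t < m, u t = t + 1 := by
  intro t
  induction t using Nat.strong_induction_on with
  | _ t ih =>
    intro ht
    rcases lt_trichotomy (u t) (t + 1) with hlt | heq | hgt
    · have hu := hpos t ht
      have hprev := ih (u t - 1) (by omega) (by omega)
      have := hinj (show u t - 1 < m by omega) ht (hprev.trans (by omega))
      omega
    · exact heq
    · obtain ⟨s, hs, hus⟩ := hcan t ht (t + 1) (by omega) hgt
      have := ih s hs (by omega)
      omega

theorem CanonicalPath.apply_zero {k : ℕ} {h : Fin (k + 1) → ℕ} (hc : CanonicalPath h) :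
    h 0 = 1 := by
  by_contra hne
  obtain ⟨s, hs, -⟩ := hc.2 0 1 one_pos (by have := hc.1 0; omega)
  exact Fin.not_lt_zero s hs

theorem eq_mod_add_one_of_canonicalPath {m : ℕ} (hm : 0 < m) {h : Fin (m + m + 1) → ℕ}
    (hc : CanonicalPath h) (hcard : #(univ.image h) = m)
    (hpar : ∀ t, ∃! t', ParallelEdges h t t') (t : Fin (m + m + 1)) : h t = t.val % m + 1 := by
  have hfib := card_filter_eq_eq_two_of_existsUnique fun t => by
    simpa only [parallelEdges_iff] using hpar t
  have hpairs : #(univ.image (edgeHeights h)) = m := by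
    have := card_filter_comp_eq_two_mul hfib fun _ => True
    simp only [filter_true, card_univ, Fintype.card_fin] at this
    omega
  have hclosed : h (Fin.last _) = h 0 := apply_last_eq_apply_zero_of_even
    (fun a => ⟨_, (card_filter_comp_eq_two_mul hfib (·.1 = a)).trans (two_mul _)⟩)
    (fun a => ⟨_, (card_filter_comp_eq_two_mul hfib (·.2 = a)).trans (two_mul _)⟩)
  have hdet : ∀ s t : Fin (m + m), h s.castSucc = h t.castSucc → h s.succ = h t.succ :=
    fun _ _ => apply_succ_eq_of_apply_castSucc_eq_of_card_le
      (image_castSucc_eq_image_of_apply_last_eq_apply_zero (by omega) hclosed)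
      (hpairs.trans hcard.symm).le
  obtain ⟨f, hf⟩ := exists_apply_eq_iterate_of_apply_succ_eq hdet
  rw [hc.apply_zero] at hf
  have hper : IsPeriodicPt f (m + m) 1 := by
    simpa [IsPeriodicPt, IsFixedPt, hf] using hclosed
  have himage : univ.image h = (range (m + m + 1)).image (f^[·] 1) := by
    rw [← image_fin_univ, image_image]
    exact image_congr fun t _ => hf t
  have hperiod : minimalPeriod f 1 = m := by
    rw [← hcard, himage, card_image_range_iterate (hper.minimalPeriod_pos (by omega))
      ((hper.minimalPeriod_le (by omega)).trans (by omega))]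
  have hinit := eq_add_one_of_injOn_of_canonical (u := (f^[·] 1)) (m := m)
    (fun s hs i hi hit => by
      obtain ⟨r, hr, hri⟩ := hc.2 ⟨s, by omega⟩ i hi (by rwa [hf])
      exact ⟨r, hr, (hf r).symm.trans hri⟩)
    (fun s hs => hf ⟨s, by omega⟩ ▸ hc.1 _) (hperiod ▸ iterate_injOn_Iio_minimalPeriod)
  rw [hf, ← iterate_mod_minimalPeriod_eq, hperiod]
  exact hinit _ (Nat.mod_lt _ hm)

section PeriodicPath

variable {k m : ℕ}

theorem canonicalPath_mod_add_one (hm : 0 < m) :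
    CanonicalPath fun t : Fin (k + 1) => t.val % m + 1 := by
  refine ⟨fun t => Nat.le_add_left 1 _, fun t i hi hit => ?_⟩
  dsimp only at hit
  have hlt : i - 1 < t.val % m := by omega
  refine ⟨⟨i - 1, by have := Nat.mod_le t.val m; omega⟩, ?_, ?_⟩
  · rw [Fin.lt_def]
    exact hlt.trans_le (Nat.mod_le _ _)
  · simp only
    rw [Nat.mod_eq_of_lt (hlt.trans (Nat.mod_lt _ hm))]
    omega

theorem card_image_mod_add_one (hm : 0 < m) (hmk : m ≤ k + 1) :
    #(univ.image fun t : Fin (k + 1) => t.val % m + 1) = m := by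
  have himage : univ.image (fun t : Fin (k + 1) => t.val % m + 1) = Icc 1 m := by
    ext a
    simp only [mem_image, mem_univ, true_and, mem_Icc]
    constructor
    · rintro ⟨t, rfl⟩
      exact ⟨Nat.le_add_left 1 _, Nat.mod_lt _ hm⟩
    · rintro ⟨ha₁, ha₂⟩
      refine ⟨⟨a - 1, by omega⟩, ?_⟩
      simp only
      rw [Nat.mod_eq_of_lt (by omega)]
      omega
  rw [himage, Nat.card_Icc, Nat.add_sub_cancel]

theorem parallelEdges_mod_add_one_iff {t t' : Fin k} :
    ParallelEdges (fun t : Fin (k + 1) => t.val % m + 1) t t' ↔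
      t ≠ t' ∧ t.val % m = t'.val % m := by
  simp only [ParallelEdges, Fin.val_castSucc, Fin.val_succ, Nat.add_right_cancel_iff]
  exact and_congr_right fun _ => and_iff_left_of_imp (Nat.ModEq.add_right 1)

theorem Nat.mod_eq_mod_iff_of_lt_add_self {a b : ℕ} (ha : a < m + m) (hb : b < m + m) :
    a % m = b % m ↔ a = b ∨ a + m = b ∨ b + m = a := by
  have hmod : ∀ c < m + m, c % m = if c < m then c else c - m := fun c hc => by
    split_ifs with hcm
    · exact Nat.mod_eq_of_lt hcm
    · rw [Nat.mod_eq_sub_mod (not_lt.1 hcm), Nat.mod_eq_of_lt (by omega)]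
  rw [hmod a ha, hmod b hb]
  split_ifs <;> omega

theorem existsUnique_parallelEdges_mod_add_one (t : Fin (m + m)) :
    ∃! t', ParallelEdges (fun t : Fin (m + m + 1) => t.val % m + 1) t t' := by
  simp only [parallelEdges_mod_add_one_iff, ne_eq, Fin.ext_iff]
  let t' : Fin (m + m) := ⟨if t.val < m then t.val + m else t.val - m, by split_ifs <;> omega⟩
  refine ⟨t', ?_, fun s ⟨hne, hs⟩ => Fin.ext ?_⟩
  · dsimp only
    rw [Nat.mod_eq_mod_iff_of_lt_add_self t.isLt t'.isLt]
    simp only [t']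
    split_ifs <;> omega
  · rw [Nat.mod_eq_mod_iff_of_lt_add_self t.isLt s.isLt] at hs
    simp only [t']
    split_ifs <;> omega

end PeriodicPath

theorem unique_canonical_path_graph (k : ℕ) (hk : 2 ≤ k) (hke : Even k)
    (h : Fin (k + 1) → ℕ) :
    (CanonicalPath h ∧ (Finset.image h Finset.univ).card = k / 2 ∧
        ∀ t : Fin k, ∃! t' : Fin k, ParallelEdges h t t') ↔
      ∀ t : Fin (k + 1), h t = t.val % (k / 2) + 1 := by
  obtain ⟨m, rfl⟩ := hke
  have hm : 0 < m := by omega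
  rw [show (m + m) / 2 = m by omega]
  refine ⟨fun ⟨hc, hcard, hpar⟩ => eq_mod_add_one_of_canonicalPath hm hc hcard hpar,
    fun H => ?_⟩
  obtain rfl : h = fun t => t.val % m + 1 := funext H
  exact ⟨canonicalPath_mod_add_one hm, card_image_mod_add_one hm (by omega),
    existsUnique_parallelEdges_mod_add_one⟩
end
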